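/- arXiv:0802.3933 — 4 statements merged into one kernel-verified Lean document; each statement's English description precedes it below -/
import Mathlib

section
/- Let A be a bounded linear operator on a Hilbert space H with A y = f, ‖f_δ - f‖ ≤ δ, and u₀ - y ⟂ ker(A). Let u_δ(t) solve u_δ' = -A*(A u_δ - f_δ), u_δ(0) = u₀. If t_δ → ∞ and t_δ δ → 0 as δ → 0, then lim_{δ→0} ‖u_δ(t_δ) - y‖ = 0. -/
/-! Write `S t = exp (-t A†A)`. Along any solution of `v' = -A†A v` one has
`(‖v‖²)' = -2 ‖A v‖²`, so `S t` is a contraction for `t ≥ 0`. Moreover `A (S t z)` solves the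
same equation for `A†`, so `‖A (S t z)‖` is nonincreasing and square integrable, hence tends
to `0`; thus `S t x → 0` on the range of `A†A`, and by equicontinuity on its closure `(ker A)ᗮ`.
The mean value theorem applied to `s ↦ S (t - s) (u s - y)` bounds the effect of the noise by
`‖A‖ δ t`, so `‖u δ (tδ δ) - y‖ ≤ ‖S (tδ δ) (u₀ - y)‖ + ‖A‖ tδ δ δ → 0`. -/

open NormedSpace Filter Topology
open scoped InnerProduct

theorem tendsto_atTop_zero_of_hasDerivAt_le_neg_sq {ψ ψ' g : ℝ → ℝ} (hψ : ∀ t, 0 ≤ ψ t)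
    (hψ' : ∀ t, HasDerivAt ψ (ψ' t) t) (hψg : ∀ t, ψ' t ≤ -g t ^ 2)
    (hg : Antitone g) (hg0 : ∀ t, 0 ≤ g t) :
    Tendsto g atTop (𝓝 0) := by
  have hbdd : BddBelow (Set.range g) := ⟨0, by rintro _ ⟨t, rfl⟩; exact hg0 t⟩
  set L := ⨅ t, g t
  suffices L = 0 from this ▸ tendsto_atTop_ciInf hg hbdd
  have hL : ∀ t, L ≤ g t := ciInf_le hbdd
  have hdecr : Antitone fun t => ψ t + L ^ 2 * t := by
    refine antitone_of_hasDerivAt_nonpos (fun t => (hψ' t).add ((hasDerivAt_id t).const_mul _))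
      fun t => ?_
    have := pow_le_pow_left₀ (le_ciInf hg0) (hL t) 2
    simp only [Pi.zero_apply, mul_one]
    linarith [hψg t]
  by_contra hL0
  have hL2 : 0 < L ^ 2 := pow_pos ((le_ciInf hg0).lt_of_ne' hL0) 2
  have key := hdecr (div_nonneg (by linarith [hψ 0]) hL2.le : 0 ≤ (ψ 0 + 1) / L ^ 2)
  simp only [mul_zero, add_zero, mul_div_cancel₀ _ hL2.ne'] at key
  linarith [hψ ((ψ 0 + 1) / L ^ 2)]

theorem HasDerivAt.complexCLM_apply {E F : Type*} [NormedAddCommGroup E] [NormedSpace ℂ E]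
    [NormedAddCommGroup F] [NormedSpace ℂ F] {c : ℝ → E →L[ℂ] F} {c' : E →L[ℂ] F}
    {u : ℝ → E} {u' : E} {t : ℝ} (hc : HasDerivAt c c' t) (hu : HasDerivAt u u' t) :
    HasDerivAt (fun s => c s (u s)) (c' (u t) + c t u') t :=
  (((ContinuousLinearMap.restrictScalarsL ℂ E F ℝ ℝ).hasFDerivAt.comp_hasDerivAt t hc :
    _)).clm_apply hu

namespace ContinuousLinearMap

variable {E F : Type*} [NormedAddCommGroup E] [InnerProductSpace ℂ E] [CompleteSpace E]
  [NormedAddCommGroup F] [InnerProductSpace ℂ F] [CompleteSpace F]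

noncomputable def gramSemigroup (A : E →L[ℂ] F) (t : ℝ) : E →L[ℂ] E :=
  exp (t • -(A† ∘L A))

variable (A : E →L[ℂ] F)

@[simp]
theorem gramSemigroup_zero : gramSemigroup A 0 = 1 := by simp [gramSemigroup]

theorem hasDerivAt_gramSemigroup (t : ℝ) :
    HasDerivAt (gramSemigroup A) (-(A† ∘L A) * gramSemigroup A t) t :=
  hasDerivAt_exp_smul_const' _ t

theorem commute_gramSemigroup (t : ℝ) : Commute (A† ∘L A) (gramSemigroup A t) :=
  ((Commute.refl _).neg_right.smul_right t).exp_right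

theorem hasDerivAt_gramSemigroup_apply (x : E) (t : ℝ) :
    HasDerivAt (gramSemigroup A · x) (-((A†) (A (gramSemigroup A t x)))) t := by
  simpa using (hasDerivAt_gramSemigroup A t).complexCLM_apply (hasDerivAt_const t x)

theorem hasDerivAt_norm_sq_of_hasDerivAt_neg_gram {v : ℝ → E} {t : ℝ}
    (hv : HasDerivAt v (-((A†) (A (v t)))) t) :
    HasDerivAt (‖v ·‖ ^ 2) (-(2 * ‖A (v t)‖ ^ 2)) t := by
  let : InnerProductSpace ℝ E := InnerProductSpace.rclikeToReal ℂ E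
  convert hv.norm_sq using 1
  rw [real_inner_eq_re_inner ℂ, inner_neg_right, adjoint_inner_right, map_neg,
    inner_self_eq_norm_sq]
  ring

theorem antitone_norm_of_hasDerivAt_neg_gram {v : ℝ → E}
    (hv : ∀ t, HasDerivAt v (-((A†) (A (v t)))) t) :
    Antitone (‖v ·‖) := by
  have hsq : Antitone (‖v ·‖ ^ 2) :=
    antitone_of_hasDerivAt_nonpos (fun t => hasDerivAt_norm_sq_of_hasDerivAt_neg_gram A (hv t))
      fun t => by simp only [Pi.zero_apply, neg_nonpos]; positivity
  exact fun s t hst =>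
    (pow_le_pow_iff_left₀ (norm_nonneg _) (norm_nonneg _) two_ne_zero).1 (hsq hst)

theorem norm_gramSemigroup_apply_le (x : E) {t : ℝ} (ht : 0 ≤ t) :
    ‖gramSemigroup A t x‖ ≤ ‖x‖ := by
  simpa using antitone_norm_of_hasDerivAt_neg_gram A (hasDerivAt_gramSemigroup_apply A x) ht

theorem norm_gramSemigroup_le_one {t : ℝ} (ht : 0 ≤ t) : ‖gramSemigroup A t‖ ≤ 1 :=
  opNorm_le_bound _ zero_le_one fun x => by simpa using norm_gramSemigroup_apply_le A x ht

theorem tendsto_norm_apply_gramSemigroup_apply (z : E) :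
    Tendsto (fun t => ‖A (gramSemigroup A t z)‖) atTop (𝓝 0) := by
  have hAv : ∀ t, HasDerivAt (fun s => A (gramSemigroup A s z))
      (-((A††) ((A†) (A (gramSemigroup A t z))))) t := fun t => by
    simpa [adjoint_adjoint] using
      (hasDerivAt_const t A).complexCLM_apply (hasDerivAt_gramSemigroup_apply A z t)
  refine tendsto_atTop_zero_of_hasDerivAt_le_neg_sq (fun t => sq_nonneg ‖gramSemigroup A t z‖)
    (fun t => hasDerivAt_norm_sq_of_hasDerivAt_neg_gram A (hasDerivAt_gramSemigroup_apply A z t))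
    (fun t => ?_) (antitone_norm_of_hasDerivAt_neg_gram (A†) hAv) fun t => norm_nonneg _
  nlinarith [sq_nonneg ‖A (gramSemigroup A t z)‖]

theorem tendsto_gramSemigroup_apply_adjoint_apply (z : E) :
    Tendsto (fun t => gramSemigroup A t ((A†) (A z))) atTop (𝓝 0) := by
  rw [tendsto_zero_iff_norm_tendsto_zero]
  refine squeeze_zero (fun t => norm_nonneg _) (fun t => ?_)
    (by simpa using (tendsto_norm_apply_gramSemigroup_apply A z).const_mul ‖A†‖)
  have hcomm : gramSemigroup A t ((A†) (A z)) = (A†) (A (gramSemigroup A t z)) := by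
    simpa using (DFunLike.congr_fun (commute_gramSemigroup A t).eq z).symm
  simpa [hcomm] using le_opNorm (A†) (A (gramSemigroup A t z))

theorem tendsto_gramSemigroup_apply_of_mem_orthogonal_ker {x : E}
    (hx : x ∈ (LinearMap.ker (A : E →ₗ[ℂ] F))ᗮ) :
    Tendsto (fun t => gramSemigroup A t x) atTop (𝓝 0) := by
  rw [← ker_adjoint_comp_self, orthogonal_ker, adjoint_comp, adjoint_adjoint] at hx
  have hequi : Equicontinuous fun t : Set.Ici (0 : ℝ) => gramSemigroup A t :=
    (LipschitzWith.uniformEquicontinuous _ 1 fun t : Set.Ici (0 : ℝ) =>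
      (gramSemigroup A t).lipschitz.weaken (norm_gramSemigroup_le_one A t.2)).equicontinuous
  rw [← tendsto_comp_val_Ici_atTop (a := 0)]
  refine (hequi x).tendsto_of_mem_closure tendsto_const_nhds ?_ hx
  rintro _ ⟨z, rfl⟩
  exact tendsto_comp_val_Ici_atTop.2 (tendsto_gramSemigroup_apply_adjoint_apply A z)

theorem norm_sub_gramSemigroup_apply_le {w : ℝ → E} {b : E}
    (hw : ∀ s, HasDerivAt w (-((A†) (A (w s))) + b) s) {t : ℝ} (ht : 0 ≤ t) :
    ‖w t - gramSemigroup A t (w 0)‖ ≤ ‖b‖ * t := by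
  have hφ : ∀ s, HasDerivAt (fun s => gramSemigroup A (t - s) (w s))
      (gramSemigroup A (t - s) b) s := by
    intro s
    have hS : HasDerivAt (fun s => gramSemigroup A (t - s))
        ((A† ∘L A) * gramSemigroup A (t - s)) s := by
      simpa [Function.comp_def] using
        (hasDerivAt_gramSemigroup A (t - s)).scomp s ((hasDerivAt_id s).const_sub t)
    convert hS.complexCLM_apply (hw s) using 1
    rw [(commute_gramSemigroup A (t - s)).eq]
    simp
  have hmvt := norm_image_sub_le_of_norm_deriv_le_segment' (fun s _ => (hφ s).hasDerivWithinAt)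
    (fun s hs => norm_gramSemigroup_apply_le A b (by linarith [hs.2])) t ⟨ht, le_rfl⟩
  simpa using hmvt

theorem norm_sub_le_gramSemigroup_add_of_hasDerivAt (y : E) (g : F) {u : ℝ → E}
    (hu : ∀ t, HasDerivAt u (-((A†) (A (u t) - g))) t) {t : ℝ} (ht : 0 ≤ t) :
    ‖u t - y‖ ≤ ‖gramSemigroup A t (u 0 - y)‖ + ‖A‖ * ‖g - A y‖ * t := by
  have hw : ∀ s, HasDerivAt (u · - y) (-((A†) (A (u s - y))) + (A†) (g - A y)) s := fun s => by
    convert (hu s).sub_const y using 1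
    simp only [map_sub]
    abel
  calc ‖u t - y‖
      ≤ ‖gramSemigroup A t (u 0 - y)‖ + ‖u t - y - gramSemigroup A t (u 0 - y)‖ :=
        norm_le_insert' _ _
    _ ≤ ‖gramSemigroup A t (u 0 - y)‖ + ‖(A†) (g - A y)‖ * t := by
        gcongr
        exact norm_sub_gramSemigroup_apply_le A hw ht
    _ ≤ ‖gramSemigroup A t (u 0 - y)‖ + ‖A‖ * ‖g - A y‖ * t := by
        gcongr
        simpa using le_opNorm (A†) (g - A y)

end ContinuousLinearMap

open ContinuousLinearMap

theorem stmt7 {H : Type*} [NormedAddCommGroup H] [InnerProductSpace ℂ H] [CompleteSpace H]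
    (A : H →L[ℂ] H) (f y u₀ : H) (hy : A y = f)
    (hperp : u₀ - y ∈ (LinearMap.ker (A : H →ₗ[ℂ] H))ᗮ)
    (fδ : ℝ → H) (hfδ : ∀ δ > 0, ‖fδ δ - f‖ ≤ δ)
    (u : ℝ → ℝ → H) (hu0 : ∀ δ > 0, u δ 0 = u₀)
    (hu : ∀ δ > 0, ∀ t : ℝ,
      HasDerivAt (u δ) (-(ContinuousLinearMap.adjoint A (A (u δ t) - fδ δ))) t)
    (tδ : ℝ → ℝ)
    (htδ : Filter.Tendsto tδ (nhdsWithin 0 (Set.Ioi 0)) Filter.atTop)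
    (htδδ : Filter.Tendsto (fun δ => tδ δ * δ) (nhdsWithin 0 (Set.Ioi 0)) (nhds 0)) :
    Filter.Tendsto (fun δ => ‖u δ (tδ δ) - y‖) (nhdsWithin 0 (Set.Ioi 0)) (nhds 0) := by
  have hbound : ∀ᶠ δ in 𝓝[>] 0,
      ‖u δ (tδ δ) - y‖ ≤ ‖gramSemigroup A (tδ δ) (u₀ - y)‖ + ‖A‖ * (tδ δ * δ) := by
    filter_upwards [htδ.eventually (eventually_ge_atTop 0), self_mem_nhdsWithin]
      with δ ht (hδ : 0 < δ)
    calc ‖u δ (tδ δ) - y‖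
        ≤ ‖gramSemigroup A (tδ δ) (u δ 0 - y)‖ + ‖A‖ * ‖fδ δ - A y‖ * tδ δ :=
          norm_sub_le_gramSemigroup_add_of_hasDerivAt A y (fδ δ) (hu δ hδ) ht
      _ ≤ ‖gramSemigroup A (tδ δ) (u₀ - y)‖ + ‖A‖ * (tδ δ * δ) := by
          rw [hu0 δ hδ, hy, mul_comm (tδ δ), ← mul_assoc]
          gcongr
          exact hfδ δ hδ
  refine squeeze_zero' (Eventually.of_forall fun δ => norm_nonneg _) hbound ?_
  have hdecay := (tendsto_gramSemigroup_apply_of_mem_orthogonal_ker A hperp).norm.comp htδ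
  simpa using hdecay.add (htδδ.const_mul ‖A‖)
end

section
/- Let A be a bounded linear operator on a Hilbert space H with Ay = f, ‖f_δ - f‖ ≤ δ, and let u_δ(t) solve u_δ' = -A*(A u_δ - f_δ), u_δ(0) = u₀. If ‖A u_δ(t) - f_δ‖ ≥ Cδ for all t in an interval [0, τ] with C > 1, then t ↦ ‖u_δ(t) - y‖ is nonincreasing on [0, τ]. -/
/-!
Along the flow `u' = -A†(A u - f_δ)` the residual `r = A u - f_δ` satisfies
`A (u - y) = r + (f_δ - f)`, so `d/dt ‖u - y‖² = -2 Re ⟪r, r + (f_δ - f)⟫ ≤ -2 ‖r‖ (‖r‖ - δ)`,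
which is nonpositive as long as the residual stays above `δ`; the discrepancy bound `C δ`
with `C > 1` guarantees this on `[0, τ]`.
-/

open RCLike ContinuousLinearMap
open scoped InnerProductSpace

section

variable {𝕜 E F : Type*} [RCLike 𝕜] [NormedAddCommGroup E] [InnerProductSpace 𝕜 E]

theorem HasDerivAt.norm_sq_rclike [NormedSpace ℝ E] {f : ℝ → E} {f' : E} {t : ℝ}
    (hf : HasDerivAt f f' t) : HasDerivAt (‖f ·‖ ^ 2) (2 * re ⟪f t, f'⟫_𝕜) t := by
  have h := (reCLM (K := 𝕜)).hasFDerivAt.comp_hasDerivAt t (hf.inner 𝕜 hf)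
  simp only [Function.comp_def, reCLM_apply, inner_self_eq_norm_sq, map_add] at h
  refine h.congr_deriv ?_
  rw [← inner_conj_symm (f t) f', conj_re, two_mul]

variable [CompleteSpace E] [NormedAddCommGroup F] [InnerProductSpace 𝕜 F] [CompleteSpace F]

theorem norm_mul_sub_le_re_inner_adjoint (A : E →L[𝕜] F) (x y : E) (g : F) :
    ‖A x - g‖ * (‖A x - g‖ - ‖g - A y‖) ≤ re ⟪x - y, adjoint A (A x - g)⟫_𝕜 := by
  have hsplit : A (x - y) = (A x - g) + (g - A y) := by rw [map_sub]; abel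
  rw [adjoint_inner_right, hsplit, inner_add_left, map_add, inner_self_eq_norm_sq]
  have hcross : -(‖g - A y‖ * ‖A x - g‖) ≤ re ⟪g - A y, A x - g⟫_𝕜 :=
    neg_le_of_abs_le ((abs_re_le_norm _).trans (norm_inner_le_norm _ _))
  nlinarith

theorem antitoneOn_norm_sub_of_hasDerivAt_neg_adjoint [NormedSpace ℝ E] (A : E →L[𝕜] F)
    {g : F} {y : E} {u : ℝ → E} {s : Set ℝ} (hs : Convex ℝ s)
    (hu : ∀ t ∈ s, HasDerivAt u (-(adjoint A (A (u t) - g))) t)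
    (hres : ∀ t ∈ s, ‖g - A y‖ ≤ ‖A (u t) - g‖) :
    AntitoneOn (fun t => ‖u t - y‖) s := by
  have hderiv : ∀ t ∈ s, HasDerivAt (‖u · - y‖ ^ 2)
      (-(2 * re ⟪u t - y, adjoint A (A (u t) - g)⟫_𝕜)) t := fun t ht => by
    simpa only [inner_neg_right, map_neg, mul_neg] using
      ((hu t ht).sub_const y).norm_sq_rclike (𝕜 := 𝕜)
  have hsq : AntitoneOn (‖u · - y‖ ^ 2) s := by
    refine antitoneOn_of_hasDerivWithinAt_nonpos hs
      (fun t ht => (hderiv t ht).continuousAt.continuousWithinAt)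
      (fun t ht => (hderiv t (interior_subset ht)).hasDerivWithinAt) fun t ht => ?_
    have hdecay := norm_mul_sub_le_re_inner_adjoint A (u t) y g
    have hnonneg := mul_nonneg (norm_nonneg (A (u t) - g))
      (sub_nonneg.2 (hres t (interior_subset ht)))
    linarith
  exact fun a ha b hb hab =>
    (pow_le_pow_iff_left₀ (norm_nonneg _) (norm_nonneg _) two_ne_zero).1 (hsq ha hb hab)

end

theorem stmt10_general {H : Type*} [NormedAddCommGroup H] [InnerProductSpace ℂ H] [CompleteSpace H]
    (A : H →L[ℂ] H) (f y fδ : H) (δ C τ : ℝ) (hC : 1 < C)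
    (hy : A y = f) (hfδ : ‖fδ - f‖ ≤ δ)
    (u : ℝ → H)
    (hu : ∀ t : ℝ, HasDerivAt u (-(ContinuousLinearMap.adjoint A (A (u t) - fδ))) t)
    (hdisc : ∀ t ∈ Set.Icc (0 : ℝ) τ, C * δ ≤ ‖A (u t) - fδ‖) :
    AntitoneOn (fun t => ‖u t - y‖) (Set.Icc 0 τ) := by
  have hδ : 0 ≤ δ := (norm_nonneg _).trans hfδ
  refine antitoneOn_norm_sub_of_hasDerivAt_neg_adjoint A (convex_Icc 0 τ) (fun t _ => hu t)
    fun t ht => ?_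
  calc ‖fδ - A y‖ = ‖fδ - f‖ := by rw [hy]
    _ ≤ δ := hfδ
    _ ≤ C * δ := le_mul_of_one_le_left hδ hC.le
    _ ≤ ‖A (u t) - fδ‖ := hdisc t ht

theorem stmt10 {H : Type*} [NormedAddCommGroup H] [InnerProductSpace ℂ H] [CompleteSpace H]
    (A : H →L[ℂ] H) (f y fδ u₀ : H) (δ C τ : ℝ) (hδ : 0 < δ) (hC : 1 < C) (hτ : 0 ≤ τ)
    (hy : A y = f) (hfδ : ‖fδ - f‖ ≤ δ)
    (u : ℝ → H) (hu0 : u 0 = u₀)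
    (hu : ∀ t : ℝ, HasDerivAt u (-(ContinuousLinearMap.adjoint A (A (u t) - fδ))) t)
    (hdisc : ∀ t ∈ Set.Icc (0 : ℝ) τ, C * δ ≤ ‖A (u t) - fδ‖) :
    AntitoneOn (fun t => ‖u t - y‖) (Set.Icc 0 τ) :=
  stmt10_general A f y fδ δ C τ hC hy hfδ u hu hdisc
end

section
/- Let A be a bounded linear operator on a Hilbert space H with Ay = f, ‖f_δ - f‖ ≤ δ, δ > 0, u₀ - y ⟂ ker(A), and suppose ‖A u₀ - f_δ‖ > Cδ for a constant C ∈ (1, 2). Then the equation ‖A u_δ(t) - f_δ‖ = Cδ has a unique solution t_δ ∈ (0, ∞), where u_δ(t) solves u_δ' = -A*(A u_δ - f_δ), u_δ(0) = u₀. -/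
/-!
Along the gradient flow `u' = -A*(A u - g)` the squared residual `‖A u - g‖²` has derivative
`-2‖A*(A u - g)‖²`, so the residual is nonincreasing. For any `y`,
`‖A x - g‖ (‖A x - g‖ - ‖A y - g‖) ≤ re ⟪x - y, A*(A x - g)⟫`;
hence `A*(A x - g) ≠ 0` whenever the residual exceeds `‖A y - g‖ ≤ δ`, which makes the residual
strictly decreasing above that level. The same inequality shows that `‖u - y‖²` decreases at a
rate bounded away from zero as long as the residual stays above `Cδ > δ`, so it must drop below
`Cδ` in finite time; the intermediate value theorem then gives the crossing.
-/

open ContinuousLinearMap Set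

section

variable {H : Type*} [NormedAddCommGroup H] [InnerProductSpace ℂ H] [CompleteSpace H]

namespace ContinuousLinearMap

variable (A : H →L[ℂ] H) {g : H}

theorem norm_sub_mul_sub_le_re_inner_adjoint (x y : H) :
    ‖A x - g‖ * (‖A x - g‖ - ‖A y - g‖) ≤
      RCLike.re (inner ℂ (x - y) (adjoint A (A x - g))) := by
  have hsplit : A (x - y) = (A x - g) - (A y - g) := by rw [map_sub]; abel
  rw [adjoint_inner_right, hsplit, inner_sub_left, map_sub, inner_self_eq_norm_sq]
  nlinarith [re_inner_le_norm (𝕜 := ℂ) (A y - g) (A x - g), norm_nonneg (A x - g)]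

theorem adjoint_apply_sub_ne_zero {x y : H} (h : ‖A y - g‖ < ‖A x - g‖) :
    adjoint A (A x - g) ≠ 0 := by
  intro hzero
  have := A.norm_sub_mul_sub_le_re_inner_adjoint (g := g) x y
  rw [hzero, inner_zero_right, map_zero] at this
  nlinarith [norm_nonneg (A y - g)]

end ContinuousLinearMap

section GradientFlow

attribute [local instance] InnerProductSpace.complexToReal

variable {A : H →L[ℂ] H} {g : H} {u : ℝ → H}
  (hu : ∀ t, HasDerivAt u (-(adjoint A (A (u t) - g))) t)
include hu

theorem hasDerivAt_norm_sq_residual (t : ℝ) :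
    HasDerivAt (fun s => ‖A (u s) - g‖ ^ 2) (-(2 * ‖adjoint A (A (u t) - g)‖ ^ 2)) t := by
  have hres : HasDerivAt (fun s => A (u s) - g) (-A (adjoint A (A (u t) - g))) t := by
    simpa using ((A.restrictScalars ℝ).hasFDerivAt.comp_hasDerivAt t (hu t)).sub_const g
  convert hres.norm_sq using 1
  rw [inner_neg_right, real_inner_eq_re_inner ℂ, ← adjoint_inner_left, inner_self_eq_norm_sq]
  ring

theorem hasDerivAt_norm_sq_sub (y : H) (t : ℝ) :
    HasDerivAt (fun s => ‖u s - y‖ ^ 2)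
      (-(2 * RCLike.re (inner ℂ (u t - y) (adjoint A (A (u t) - g))))) t := by
  convert ((hu t).sub_const y).norm_sq using 1
  rw [inner_neg_right, real_inner_eq_re_inner ℂ]
  ring

theorem antitone_norm_residual : Antitone fun t => ‖A (u t) - g‖ := by
  have hsq : Antitone fun t => ‖A (u t) - g‖ ^ 2 :=
    antitone_of_deriv_nonpos (fun t => (hasDerivAt_norm_sq_residual hu t).differentiableAt)
      fun t => by rw [(hasDerivAt_norm_sq_residual hu t).deriv]; nlinarith
  exact fun a b hab =>
    (pow_le_pow_iff_left₀ (norm_nonneg _) (norm_nonneg _) two_ne_zero).1 (hsq hab)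

theorem strictAntiOn_norm_residual (y : H) :
    StrictAntiOn (fun t => ‖A (u t) - g‖) {t | ‖A y - g‖ < ‖A (u t) - g‖} := by
  intro a _ b hb hab
  have hsq : StrictAntiOn (fun t => ‖A (u t) - g‖ ^ 2) (Icc a b) := by
    refine strictAntiOn_of_deriv_neg (convex_Icc a b)
      (fun s _ => (hasDerivAt_norm_sq_residual hu s).continuousAt.continuousWithinAt)
      fun s hs => ?_
    rw [interior_Icc] at hs
    have hs_above : ‖A y - g‖ < ‖A (u s) - g‖ := hb.trans_le (antitone_norm_residual hu hs.2.le)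
    have := norm_pos_iff.2 (A.adjoint_apply_sub_ne_zero hs_above)
    rw [(hasDerivAt_norm_sq_residual hu s).deriv]
    nlinarith
  exact (pow_lt_pow_iff_left₀ (norm_nonneg _) (norm_nonneg _) two_ne_zero).1
    (hsq (left_mem_Icc.2 hab.le) (right_mem_Icc.2 hab.le) hab)

theorem exists_norm_residual_lt (y : H) {c : ℝ} (hc : ‖A y - g‖ < c) :
    ∃ t, 0 ≤ t ∧ ‖A (u t) - g‖ < c := by
  by_contra! hge
  set e : ℝ → ℝ := fun s => ‖u s - y‖ ^ 2
  set K := 2 * c * (c - ‖A y - g‖)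
  have hK : 0 < K := mul_pos (mul_pos two_pos ((norm_nonneg _).trans_lt hc)) (sub_pos.2 hc)
  have hdecay : ∀ s ∈ interior (Ici (0 : ℝ)), deriv e s ≤ -K := by
    intro s hs
    rw [interior_Ici] at hs
    have hw := hge s (le_of_lt hs)
    have := A.norm_sub_mul_sub_le_re_inner_adjoint (g := g) (u s) y
    rw [(hasDerivAt_norm_sq_sub hu y s).deriv]
    nlinarith [norm_nonneg (A y - g)]
  set T := e 0 / K + 1
  have hT : 0 ≤ T := by positivity
  have := (convex_Ici 0).image_sub_le_mul_sub_of_deriv_le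
    (fun s _ => (hasDerivAt_norm_sq_sub hu y s).continuousAt.continuousWithinAt)
    (fun s _ => (hasDerivAt_norm_sq_sub hu y s).differentiableAt.differentiableWithinAt)
    hdecay 0 self_mem_Ici T hT hT
  have hKT : K * T = e 0 + K := by rw [mul_add, mul_div_cancel₀ _ hK.ne', mul_one]
  nlinarith [sq_nonneg ‖u T - y‖]

end GradientFlow

end

theorem stmt11_general {H : Type*} [NormedAddCommGroup H] [InnerProductSpace ℂ H] [CompleteSpace H]
    (A : H →L[ℂ] H) (f y fδ u₀ : H) (δ C : ℝ) (hδ : 0 < δ) (hC1 : 1 < C)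
    (hy : A y = f) (hfδ : ‖fδ - f‖ ≤ δ)
    (h0 : C * δ < ‖A u₀ - fδ‖)
    (u : ℝ → H) (hu0 : u 0 = u₀)
    (hu : ∀ t : ℝ, HasDerivAt u (-(ContinuousLinearMap.adjoint A (A (u t) - fδ))) t) :
    ∃! t : ℝ, 0 < t ∧ ‖A (u t) - fδ‖ = C * δ := by
  have hdata : ‖A y - fδ‖ < C * δ := by rw [hy, norm_sub_rev]; nlinarith
  obtain ⟨T, hT, hT_below⟩ := exists_norm_residual_lt hu y hdata
  have hcont : Continuous fun t => ‖A (u t) - fδ‖ := by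
    have : Continuous u := continuous_iff_continuousAt.2 fun t => (hu t).continuousAt
    fun_prop
  obtain ⟨t, ht, htc⟩ := intermediate_value_Icc' hT hcont.continuousOn
    ⟨hT_below.le, (hu0 ▸ h0).le⟩
  refine ⟨t, ⟨ht.1.lt_of_ne ?_, htc⟩, fun t' ht' => ?_⟩
  · rintro rfl
    exact h0.ne' (by simpa [hu0] using htc)
  · exact (strictAntiOn_norm_residual hu y).injOn (by simp [ht'.2, hdata])
      (by simp [htc, hdata]) (ht'.2.trans htc.symm)

theorem stmt11 {H : Type*} [NormedAddCommGroup H] [InnerProductSpace ℂ H] [CompleteSpace H]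
    (A : H →L[ℂ] H) (f y fδ u₀ : H) (δ C : ℝ) (hδ : 0 < δ) (hC1 : 1 < C) (hC2 : C < 2)
    (hy : A y = f) (hfδ : ‖fδ - f‖ ≤ δ)
    (hperp : u₀ - y ∈ (LinearMap.ker (A : H →ₗ[ℂ] H))ᗮ)
    (h0 : C * δ < ‖A u₀ - fδ‖)
    (u : ℝ → H) (hu0 : u 0 = u₀)
    (hu : ∀ t : ℝ, HasDerivAt u (-(ContinuousLinearMap.adjoint A (A (u t) - fδ))) t) :
    ∃! t : ℝ, 0 < t ∧ ‖A (u t) - fδ‖ = C * δ :=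
  stmt11_general A f y fδ u₀ δ C hδ hC1 hy hfδ h0 u hu0 hu
end

section
/- Let B be a bounded nonnegative selfadjoint operator on a Hilbert space H and h ∈ H with Bh ≠ 0. Then ψ(t) = ‖e^{-tB} h‖ satisfies ψ(t) ψ''(t) ≥ ‖B e^{-tB} h‖² > 0 for all t ≥ 0; in particular ψ is strictly convex on [0, ∞). -/
/-!
Write `u t = e^{-tB} h`, so `u' = -B u`, and `ψ = ‖u‖`. Differentiating `ψ² = ‖u‖²` gives
`ψ ψ' = -Re ⟪B u, u⟫`, and differentiating once more, using that `B` is symmetric,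
`ψ ψ'' + (ψ')² = 2 ‖B u‖²`. By Cauchy–Schwarz `(ψ')² ≤ ‖B u‖²`, hence `ψ ψ'' ≥ ‖B u‖²`, which is
positive because `e^{-tB}` is invertible and commutes with `B`.
-/

open NormedSpace
open scoped InnerProductSpace

section Curve

variable {H : Type*} [NormedAddCommGroup H] [InnerProductSpace ℂ H] {A : H →L[ℂ] H} {u : ℝ → H}

theorem HasDerivAt.re_inner_apply_self (hA : (A : H →ₗ[ℂ] H).IsSymmetric) {u' : H} {t : ℝ}
    (hu : HasDerivAt u u' t) :
    HasDerivAt (fun s ↦ RCLike.re ⟪A (u s), u s⟫_ℂ) (2 * RCLike.re ⟪A (u t), u'⟫_ℂ) t := by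
  have hAu : HasDerivAt (fun s ↦ A (u s)) (A u') t :=
    (A.restrictScalars ℝ).hasFDerivAt.comp_hasDerivAt t hu
  refine (RCLike.reCLM.hasFDerivAt.comp_hasDerivAt t (hAu.inner ℂ hu)).congr_deriv ?_
  rw [RCLike.reCLM_apply, map_add, ← ContinuousLinearMap.coe_coe A, hA, inner_re_symm]
  ring

theorem hasDerivAt_re_inner_apply_self_of_hasDerivAt_neg_apply
    (hA : (A : H →ₗ[ℂ] H).IsSymmetric) (hu : ∀ t, HasDerivAt u (-A (u t)) t) (t : ℝ) :
    HasDerivAt (fun s ↦ RCLike.re ⟪A (u s), u s⟫_ℂ) (-2 * ‖A (u t)‖ ^ 2) t := by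
  convert (hu t).re_inner_apply_self hA using 1
  rw [inner_neg_right, map_neg, inner_self_eq_norm_sq]
  ring

theorem hasDerivAt_norm_sq_of_hasDerivAt_neg_apply (hu : ∀ t, HasDerivAt u (-A (u t)) t) (t : ℝ) :
    HasDerivAt (fun s ↦ ‖u s‖ ^ 2) (-2 * RCLike.re ⟪A (u t), u t⟫_ℂ) t := by
  convert (hu t).re_inner_apply_self (A := 1) LinearMap.IsSymmetric.id using 1
  · ext s; exact (inner_self_eq_norm_sq (u s)).symm
  · simp [inner_neg_right, inner_re_symm]

theorem hasDerivAt_norm_of_hasDerivAt_neg_apply (hu : ∀ t, HasDerivAt u (-A (u t)) t) {t : ℝ}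
    (ht : u t ≠ 0) :
    HasDerivAt (fun s ↦ ‖u s‖) (-RCLike.re ⟪A (u t), u t⟫_ℂ / ‖u t‖) t := by
  have := (hasDerivAt_norm_sq_of_hasDerivAt_neg_apply hu t).sqrt (by positivity)
  simp only [Real.sqrt_sq (norm_nonneg _)] at this
  convert this using 1
  ring

theorem norm_mul_deriv_deriv_norm_add_sq (hA : (A : H →ₗ[ℂ] H).IsSymmetric)
    (hu : ∀ t, HasDerivAt u (-A (u t)) t) (hu0 : ∀ t, u t ≠ 0) (t : ℝ) :
    ‖u t‖ * deriv (deriv fun s ↦ ‖u s‖) t + deriv (fun s ↦ ‖u s‖) t ^ 2 =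
      2 * ‖A (u t)‖ ^ 2 := by
  set α := fun s ↦ RCLike.re ⟪A (u s), u s⟫_ℂ
  have hderiv : deriv (fun s ↦ ‖u s‖) = fun s ↦ -α s / ‖u s‖ :=
    funext fun s ↦ (hasDerivAt_norm_of_hasDerivAt_neg_apply hu (hu0 s)).deriv
  have hα := hasDerivAt_re_inner_apply_self_of_hasDerivAt_neg_apply hA hu t
  have hderiv_diff : DifferentiableAt ℝ (fun s ↦ -α s / ‖u s‖) t :=
    (hα.neg.div (hasDerivAt_norm_of_hasDerivAt_neg_apply hu (hu0 t))
      (norm_ne_zero_iff.2 (hu0 t))).differentiableAt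
  -- `‖u‖ * ‖u‖' = -α`, differentiated once more
  have hprod : HasDerivAt (fun s ↦ ‖u s‖ * (-α s / ‖u s‖))
      (deriv (fun s ↦ ‖u s‖) t ^ 2 + ‖u t‖ * deriv (deriv fun s ↦ ‖u s‖) t) t := by
    refine ((hasDerivAt_norm_of_hasDerivAt_neg_apply hu (hu0 t)).mul
      hderiv_diff.hasDerivAt).congr_deriv ?_
    rw [hderiv]; ring
  have hcancel : (fun s ↦ ‖u s‖ * (-α s / ‖u s‖)) = fun s ↦ -α s :=
    funext fun s ↦ mul_div_cancel₀ _ (norm_ne_zero_iff.2 (hu0 s))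
  rw [hcancel] at hprod
  linarith [hprod.unique hα.neg]

theorem sq_deriv_norm_le (hu : ∀ t, HasDerivAt u (-A (u t)) t) {t : ℝ} (ht : u t ≠ 0) :
    deriv (fun s ↦ ‖u s‖) t ^ 2 ≤ ‖A (u t)‖ ^ 2 := by
  rw [(hasDerivAt_norm_of_hasDerivAt_neg_apply hu ht).deriv, ← sq_abs, abs_div, abs_neg, abs_norm]
  have hCS : |RCLike.re ⟪A (u t), u t⟫_ℂ| ≤ ‖A (u t)‖ * ‖u t‖ :=
    (RCLike.abs_re_le_norm _).trans (norm_inner_le_norm _ _)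
  gcongr
  rwa [div_le_iff₀ (norm_pos_iff.2 ht)]

theorem sq_norm_apply_le_norm_mul_deriv_deriv_norm (hA : (A : H →ₗ[ℂ] H).IsSymmetric)
    (hu : ∀ t, HasDerivAt u (-A (u t)) t) (hu0 : ∀ t, u t ≠ 0) (t : ℝ) :
    ‖A (u t)‖ ^ 2 ≤ ‖u t‖ * deriv (deriv fun s ↦ ‖u s‖) t := by
  linarith [norm_mul_deriv_deriv_norm_add_sq hA hu hu0 t, sq_deriv_norm_le hu (hu0 t)]

theorem strictConvexOn_norm_of_hasDerivAt_neg_apply (hA : (A : H →ₗ[ℂ] H).IsSymmetric)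
    (hu : ∀ t, HasDerivAt u (-A (u t)) t) (hAu : ∀ t, A (u t) ≠ 0) :
    StrictConvexOn ℝ Set.univ fun s ↦ ‖u s‖ := by
  have hu0 (t : ℝ) : u t ≠ 0 := ne_zero_of_map (hAu t)
  refine strictConvexOn_univ_of_deriv2_pos
    (continuous_iff_continuousAt.2 fun t ↦ (hu t).continuousAt.norm) fun t ↦ ?_
  refine pos_of_mul_pos_right ?_ (norm_nonneg (u t))
  exact (pow_pos (norm_pos_iff.2 (hAu t)) 2).trans_le
    (sq_norm_apply_le_norm_mul_deriv_deriv_norm hA hu hu0 t)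

end Curve

section Exp

variable {H : Type*} [NormedAddCommGroup H] [InnerProductSpace ℂ H] [CompleteSpace H]
  (B : H →L[ℂ] H)

theorem hasDerivAt_exp_neg_smul_apply (h : H) (t : ℝ) :
    HasDerivAt (fun s : ℝ ↦ exp (-(s : ℂ) • B) h) (-B (exp (-(t : ℂ) • B) h)) t := by
  have happly := ((ContinuousLinearMap.apply ℂ H h).hasFDerivAt.comp_hasDerivAt _
    (hasDerivAt_exp_smul_const' (-B) (t : ℂ))).scomp t Complex.ofRealCLM.hasDerivAt
  simp only [Function.comp_def, Complex.ofRealCLM_apply, Complex.ofReal_one, one_smul, smul_neg,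
    ← neg_smul] at happly
  exact happly

theorem apply_exp_smul_apply_ne_zero (z : ℂ) {h : H} (hBh : B h ≠ 0) :
    B (exp (z • B) h) ≠ 0 := by
  have hcomm : B * exp (z • B) = exp (z • B) * B := ((Commute.refl B).smul_right z).exp_right.eq
  have hunit : IsUnit (exp (z • B)) :=
    isUnit_exp_of_mem_ball ((expSeries_radius_eq_top ℂ (H →L[ℂ] H)).symm ▸ edist_lt_top _ _)
  rw [← mul_apply_eq_comp, hcomm, mul_apply_eq_comp]
  exact (map_ne_zero_iff _ (ContinuousLinearMap.isUnit_iff_bijective.1 hunit).injective).2 hBh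

end Exp

theorem stmt15 {H : Type*} [NormedAddCommGroup H] [InnerProductSpace ℂ H] [CompleteSpace H]
    (B : H →L[ℂ] H) (hB : B.IsPositive) (h : H) (hBh : B h ≠ 0)
    (ψ : ℝ → ℝ) (hψ : ∀ t : ℝ, ψ t = ‖NormedSpace.exp ((-(t : ℂ)) • B) h‖) :
    (∀ t : ℝ, 0 ≤ t →
      ‖B (NormedSpace.exp ((-(t : ℂ)) • B) h)‖ ^ 2 ≤ ψ t * deriv (deriv ψ) t ∧
      0 < ‖B (NormedSpace.exp ((-(t : ℂ)) • B) h)‖ ^ 2) ∧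
    StrictConvexOn ℝ (Set.Ici 0) ψ := by
  obtain rfl : ψ = fun t : ℝ ↦ ‖exp (-(t : ℂ) • B) h‖ := funext hψ
  have hu := hasDerivAt_exp_neg_smul_apply B h
  have hBu (t : ℝ) := apply_exp_smul_apply_ne_zero B (-(t : ℂ)) hBh
  have hu0 (t : ℝ) : exp (-(t : ℂ) • B) h ≠ 0 := ne_zero_of_map (hBu t)
  refine ⟨fun t _ ↦ ⟨sq_norm_apply_le_norm_mul_deriv_deriv_norm hB.isSymmetric hu hu0 t,
    pow_pos (norm_pos_iff.2 (hBu t)) 2⟩, ?_⟩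
  exact (strictConvexOn_norm_of_hasDerivAt_neg_apply hB.isSymmetric hu hBu).subset
    (Set.subset_univ _) (convex_Ici 0)
end
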